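/- arXiv:1311.2661 — 3 statements merged into one kernel-verified Lean document; each statement's English description precedes it below -/
import Mathlib

section
/- Suppose the primal and dual condition numbers δ_P and δ_D of the LP are both positive, and let (x*, u*) be any primal–dual optimal pair with C_* := max(‖x* − x̄‖, ‖u* − ū‖). Then the unique solution x(β) of the regularized quadratic penalty problem satisfies ‖A x(β) − b‖ ≤ (1/β)(1+√2) C_* and ‖x(β) − x̄‖ ≤ √6 C_*. If in addition β ≥ 10 C_* / (‖d‖ min(δ_P, δ_D)), then |c^T x* − c^T x(β)| ≤ (1/β)[25 C_*/(2 δ_P δ_D) + 6 C_*² + √6 ‖x̄‖ C_*]. -/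
/-! Comparing `f_β(x(β))` with `f_β(x*)` and bounding `cᵀx(β)` from below by the Lagrangian at
`u*` gives, for the residual `r = A x(β) − b`,
`(β/2)‖r‖² + ‖x(β) − x̄‖²/(2β) ≤ ⟨ū − u*, r⟩ + ‖x* − x̄‖²/(2β)`,
a quadratic inequality in `β‖r‖` and `‖x(β) − x̄‖` that yields `β‖r‖ ≤ (1 + √2) C_*` and
`‖x(β) − x̄‖ ≤ √2 C_*`. The same two inequalities bound `|cᵀx* − cᵀx(β)|` by
`(‖u*‖ + C_*)‖r‖ + C_*²/(2β)`. Finally `‖u*‖ δ_P δ_D ≤ 1`: a nonzero dual feasible `u` is a Farkas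
certificate of primal infeasibility for a rank-one perturbation of `(A, b)` of size
`max(‖c‖, −bᵀu)/‖u‖`, symmetrically `x*` certifies dual infeasibility of a perturbation of size
`max(‖b‖, cᵀx*)/‖x*‖`, and `δ_D ≤ 1`. -/

open Matrix Finset MeasureTheory ProbabilityTheory

/-- Euclidean norm of a finitely-indexed real vector. -/
noncomputable def l2norm {ι : Type*} [Fintype ι] (x : ι → ℝ) : ℝ :=
  Real.sqrt (∑ i, (x i) ^ 2)

/-- Frobenius norm of a real matrix. -/
noncomputable def frobNorm {ι κ : Type*} [Fintype ι] [Fintype κ] (A : Matrix ι κ ℝ) : ℝ :=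
  Real.sqrt (∑ i, ∑ j, (A i j) ^ 2)

/-- Euclidean inner product. -/
noncomputable def rdot {ι : Type*} [Fintype ι] (a b : ι → ℝ) : ℝ := ∑ i, a i * b i

/-- The regularized quadratic penalty objective
`f_β(x) = cᵀx − ūᵀ(Ax−b) + (β/2)‖Ax−b‖² + (1/(2β))‖x−x̄‖²`. -/
noncomputable def fpen {ι κ : Type*} [Fintype ι] [Fintype κ]
    (A : Matrix ι κ ℝ) (b : ι → ℝ) (c : κ → ℝ) (ub : ι → ℝ) (xb : κ → ℝ)
    (β : ℝ) (x : κ → ℝ) : ℝ :=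
  rdot c x - rdot ub (A.mulVec x - b) + (β / 2) * l2norm (A.mulVec x - b) ^ 2
    + (1 / (2 * β)) * l2norm (x - xb) ^ 2

/-- Feasibility of the standard-form primal LP `Ax = b, x ≥ 0`. -/
def PrimalFeasible {ι κ : Type*} [Fintype ι] [Fintype κ]
    (A : Matrix ι κ ℝ) (b : ι → ℝ) : Prop :=
  ∃ x : κ → ℝ, (∀ j, 0 ≤ x j) ∧ A.mulVec x = b

/-- Feasibility of the dual LP `Aᵀu ≤ c`. -/
def DualFeasible {ι κ : Type*} [Fintype ι] [Fintype κ]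
    (A : Matrix ι κ ℝ) (c : κ → ℝ) : Prop :=
  ∃ u : ι → ℝ, ∀ j, Aᵀ.mulVec u j ≤ c j

/-- Norm of the data `d = (A, b, c)`: `max(‖A‖_F, ‖b‖₂, ‖c‖₂)`. -/
noncomputable def dnorm {ι κ : Type*} [Fintype ι] [Fintype κ]
    (A : Matrix ι κ ℝ) (b : ι → ℝ) (c : κ → ℝ) : ℝ :=
  max (frobNorm A) (max (l2norm b) (l2norm c))

/-- Distance of the data to primal infeasibility. -/
noncomputable def distPri {ι κ : Type*} [Fintype ι] [Fintype κ]
    (A : Matrix ι κ ℝ) (b : ι → ℝ) (c : κ → ℝ) : ℝ :=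
  sInf { r : ℝ | ∃ (dA : Matrix ι κ ℝ) (db : ι → ℝ) (dc : κ → ℝ),
    ¬ PrimalFeasible (A + dA) (b + db) ∧ r = dnorm dA db dc }

/-- Distance of the data to dual infeasibility. -/
noncomputable def distDual {ι κ : Type*} [Fintype ι] [Fintype κ]
    (A : Matrix ι κ ℝ) (b : ι → ℝ) (c : κ → ℝ) : ℝ :=
  sInf { r : ℝ | ∃ (dA : Matrix ι κ ℝ) (db : ι → ℝ) (dc : κ → ℝ),
    ¬ DualFeasible (A + dA) (c + dc) ∧ r = dnorm dA db dc }

/-- Renegar primal condition number `δ_P`. -/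
noncomputable def deltaP {ι κ : Type*} [Fintype ι] [Fintype κ]
    (A : Matrix ι κ ℝ) (b : ι → ℝ) (c : κ → ℝ) : ℝ := distPri A b c / dnorm A b c

/-- Renegar dual condition number `δ_D`. -/
noncomputable def deltaD {ι κ : Type*} [Fintype ι] [Fintype κ]
    (A : Matrix ι κ ℝ) (b : ι → ℝ) (c : κ → ℝ) : ℝ := distDual A b c / dnorm A b c

section Euclidean

variable {ι : Type*} [Fintype ι]

lemma l2norm_eq_norm (x : ι → ℝ) : l2norm x = ‖(WithLp.toLp 2 x : EuclideanSpace ℝ ι)‖ := by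
  simp [l2norm, EuclideanSpace.norm_eq]

lemma rdot_eq_inner (a b : ι → ℝ) :
    rdot a b = inner ℝ (WithLp.toLp 2 a : EuclideanSpace ℝ ι) (WithLp.toLp 2 b) := by
  simp [rdot, PiLp.inner_apply, mul_comm]

lemma l2norm_nonneg (x : ι → ℝ) : 0 ≤ l2norm x := Real.sqrt_nonneg _

lemma abs_rdot_le (a b : ι → ℝ) : |rdot a b| ≤ l2norm a * l2norm b := by
  rw [rdot_eq_inner, l2norm_eq_norm, l2norm_eq_norm]
  exact abs_real_inner_le_norm _ _

lemma rdot_le (a b : ι → ℝ) : rdot a b ≤ l2norm a * l2norm b :=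
  (le_abs_self _).trans (abs_rdot_le a b)

lemma l2norm_sq (x : ι → ℝ) : l2norm x ^ 2 = rdot x x := by
  rw [rdot_eq_inner, l2norm_eq_norm, real_inner_self_eq_norm_sq]

lemma l2norm_add_le (x y : ι → ℝ) : l2norm (x + y) ≤ l2norm x + l2norm y := by
  simp only [l2norm_eq_norm, WithLp.toLp_add]
  exact norm_add_le _ _

lemma l2norm_neg (x : ι → ℝ) : l2norm (-x) = l2norm x := by
  simp only [l2norm_eq_norm, WithLp.toLp_neg, norm_neg]

lemma l2norm_le_add_sub (x y : ι → ℝ) : l2norm y ≤ l2norm x + l2norm (x - y) := by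
  simp only [l2norm_eq_norm, WithLp.toLp_sub]
  exact norm_le_norm_add_norm_sub _ _

lemma l2norm_smul (r : ℝ) (x : ι → ℝ) : l2norm (r • x) = |r| * l2norm x := by
  simp only [l2norm_eq_norm, WithLp.toLp_smul, norm_smul, Real.norm_eq_abs]

@[simp] lemma l2norm_zero : l2norm (0 : ι → ℝ) = 0 := by simp [l2norm]

lemma l2norm_pos {x : ι → ℝ} (hx : x ≠ 0) : 0 < l2norm x := by
  rw [l2norm_eq_norm, norm_pos_iff]
  simpa using hx

lemma l2norm_single [DecidableEq ι] (i : ι) {r : ℝ} (hr : 0 ≤ r) :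
    l2norm (Pi.single i r) = r := by
  simp [l2norm_eq_norm, hr]

lemma rdot_comm (a b : ι → ℝ) : rdot a b = rdot b a := dotProduct_comm a b

lemma rdot_mulVec {κ : Type*} [Fintype κ] (u : ι → ℝ) (A : Matrix ι κ ℝ) (x : κ → ℝ) :
    rdot u (A *ᵥ x) = rdot (Aᵀ *ᵥ u) x := by
  show u ⬝ᵥ A *ᵥ x = (Aᵀ *ᵥ u) ⬝ᵥ x
  rw [dotProduct_mulVec, mulVec_transpose]

end Euclidean

section Duality

variable {ι κ : Type*} [Fintype ι] [Fintype κ] {A : Matrix ι κ ℝ} {b : ι → ℝ} {c : κ → ℝ}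

lemma rdot_mulVec_le_of_dual_feasible {u : ι → ℝ} {x : κ → ℝ}
    (hu : ∀ j, (Aᵀ *ᵥ u) j ≤ c j) (hx : ∀ j, 0 ≤ x j) : rdot u (A *ᵥ x) ≤ rdot c x := by
  rw [rdot_mulVec]
  exact Finset.sum_le_sum fun j _ => mul_le_mul_of_nonneg_right (hu j) (hx j)

lemma rdot_le_lagrangian {u : ι → ℝ} {x : κ → ℝ}
    (hu : ∀ j, (Aᵀ *ᵥ u) j ≤ c j) (hx : ∀ j, 0 ≤ x j) :
    rdot b u ≤ rdot c x - rdot u (A *ᵥ x - b) := by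
  have hsub : rdot u (A *ᵥ x - b) = rdot u (A *ᵥ x) - rdot b u := by
    rw [rdot_comm b u]
    exact dotProduct_sub u _ _
  linarith [rdot_mulVec_le_of_dual_feasible hu hx]

lemma not_primalFeasible_of_certificate {u : ι → ℝ}
    (hu : ∀ j, (Aᵀ *ᵥ u) j ≤ 0) (hbu : 0 < rdot b u) : ¬ PrimalFeasible A b := by
  rintro ⟨x, hx, rfl⟩
  have h := rdot_mulVec_le_of_dual_feasible (c := 0) hu hx
  have h0 : rdot (0 : κ → ℝ) x = 0 := zero_dotProduct x
  rw [rdot_comm] at hbu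
  linarith

lemma not_dualFeasible_of_certificate {x : κ → ℝ}
    (hx : ∀ j, 0 ≤ x j) (hAx : A *ᵥ x = 0) (hcx : rdot c x < 0) : ¬ DualFeasible A c := by
  rintro ⟨u, hu⟩
  have h := rdot_mulVec_le_of_dual_feasible hu hx
  have h0 : rdot u (A *ᵥ x) = 0 := by rw [hAx]; exact dotProduct_zero u
  linarith

end Duality

section Distance

variable {ι κ : Type*} [Fintype ι] [Fintype κ] {A : Matrix ι κ ℝ} {b : ι → ℝ} {c : κ → ℝ}

lemma dnorm_nonneg (A : Matrix ι κ ℝ) (b : ι → ℝ) (c : κ → ℝ) : 0 ≤ dnorm A b c :=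
  (Real.sqrt_nonneg _).trans (le_max_left _ _)

lemma frobNorm_le_dnorm : frobNorm A ≤ dnorm A b c := le_max_left _ _

lemma l2norm_le_dnorm_left : l2norm b ≤ dnorm A b c :=
  (le_max_left _ _).trans (le_max_right _ _)

lemma l2norm_le_dnorm_right : l2norm c ≤ dnorm A b c :=
  (le_max_right _ _).trans (le_max_right _ _)

lemma frobNorm_vecMulVec (u : ι → ℝ) (w : κ → ℝ) :
    frobNorm (vecMulVec u w) = l2norm u * l2norm w := by
  rw [frobNorm, l2norm, l2norm, ← Real.sqrt_mul (Finset.sum_nonneg fun i _ => sq_nonneg (u i)),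
    Finset.sum_mul]
  simp only [vecMulVec_apply, mul_pow, Finset.mul_sum]

lemma distPri_le {dA : Matrix ι κ ℝ} {db : ι → ℝ} (dc : κ → ℝ)
    (h : ¬ PrimalFeasible (A + dA) (b + db)) : distPri A b c ≤ dnorm dA db dc :=
  csInf_le ⟨0, by rintro _ ⟨_, _, _, -, rfl⟩; exact dnorm_nonneg _ _ _⟩ ⟨dA, db, dc, h, rfl⟩

lemma distDual_le {dA : Matrix ι κ ℝ} (db : ι → ℝ) {dc : κ → ℝ}
    (h : ¬ DualFeasible (A + dA) (c + dc)) : distDual A b c ≤ dnorm dA db dc :=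
  csInf_le ⟨0, by rintro _ ⟨_, _, _, -, rfl⟩; exact dnorm_nonneg _ _ _⟩ ⟨dA, db, dc, h, rfl⟩

lemma distDual_nonneg : 0 ≤ distDual A b c :=
  Real.sInf_nonneg (by rintro _ ⟨_, _, _, -, rfl⟩; exact dnorm_nonneg _ _ _)

lemma distDual_le_dnorm : distDual A b c ≤ dnorm A b c := by
  rcases isEmpty_or_nonempty κ with hκ | ⟨⟨j⟩⟩
  · -- without columns every dual is feasible, and `sInf ∅ = 0`
    have hS : {r : ℝ | ∃ (dA : Matrix ι κ ℝ) (db : ι → ℝ) (dc : κ → ℝ),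
        ¬ DualFeasible (A + dA) (c + dc) ∧ r = dnorm dA db dc} = ∅ :=
      Set.eq_empty_of_forall_notMem fun _ ⟨_, _, _, h, _⟩ => h ⟨0, isEmptyElim⟩
    rw [distDual, hS, Real.sInf_empty]
    exact dnorm_nonneg A b c
  classical
  refine le_of_forall_pos_le_add fun ε hε => ?_
  have hinf : ¬ DualFeasible (A + -A) (c + (-c - Pi.single j ε)) := by
    refine not_dualFeasible_of_certificate (x := Pi.single j 1)
      (Pi.single_nonneg.mpr zero_le_one : (0 : κ → ℝ) ≤ _)
      (by rw [add_neg_cancel, zero_mulVec]) ?_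
    show (c + (-c - Pi.single j ε)) ⬝ᵥ Pi.single j 1 < 0
    simp only [dotProduct_single, Pi.add_apply, Pi.sub_apply, Pi.neg_apply, Pi.single_eq_same]
    linarith
  have hc : l2norm (-c - Pi.single j ε) ≤ l2norm c + ε := by
    calc l2norm (-c - Pi.single j ε) ≤ l2norm (-c) + l2norm (-Pi.single j ε) := by
          rw [sub_eq_add_neg]; exact l2norm_add_le _ _
      _ = l2norm c + ε := by rw [l2norm_neg, l2norm_neg, l2norm_single j hε.le]
  calc distDual A b c ≤ dnorm (-A) 0 (-c - Pi.single j ε) := distDual_le 0 hinf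
    _ ≤ dnorm A b c + ε := by
      have hA : frobNorm (-A) = frobNorm A := by simp [frobNorm]
      refine max_le ?_ (max_le ?_ ?_)
      · rw [hA]; linarith [frobNorm_le_dnorm (A := A) (b := b) (c := c)]
      · rw [l2norm_zero]; linarith [dnorm_nonneg A b c]
      · linarith [l2norm_le_dnorm_right (A := A) (b := b) (c := c)]

lemma l2norm_mul_distPri_le {u : ι → ℝ} (hu : ∀ j, (Aᵀ *ᵥ u) j ≤ c j) :
    l2norm u * distPri A b c ≤ max (l2norm c) (-rdot b u) := by
  rcases eq_or_ne u 0 with rfl | hu0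
  · simp [l2norm_nonneg]
  set N := l2norm u with hNdef
  have hN : 0 < N := l2norm_pos hu0
  have huu : rdot u u = N ^ 2 := (l2norm_sq u).symm
  refine le_of_forall_pos_le_add fun ε hε => ?_
  set M := max (l2norm c) (-rdot b u) + ε
  set w := -(N ^ 2)⁻¹ • u
  have hwu : w ⬝ᵥ u = -1 := by
    rw [smul_dotProduct, smul_eq_mul]; change -(N ^ 2)⁻¹ * rdot u u = -1
    rw [huu]; field_simp
  -- `u` certifies the infeasibility of the rank-one perturbation `(A - u cᵀ / N², b + M u / N²)`
  have hinf : ¬ PrimalFeasible (A + vecMulVec w c) (b + (M / N ^ 2) • u) := by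
    refine not_primalFeasible_of_certificate (u := u) (fun j => ?_) ?_
    · simp only [transpose_add, add_mulVec, transpose_vecMulVec, vecMulVec_mulVec, hwu,
        Pi.add_apply, Pi.smul_apply, MulOpposite.smul_eq_mul_unop, MulOpposite.unop_op]
      linarith [hu j]
    · change 0 < (b + (M / N ^ 2) • u) ⬝ᵥ u
      rw [add_dotProduct, smul_dotProduct, smul_eq_mul]
      change 0 < rdot b u + M / N ^ 2 * rdot u u
      rw [huu, div_mul_cancel₀ _ (by positivity)]
      linarith [le_max_right (l2norm c) (-rdot b u)]
  have hdnorm : dnorm (vecMulVec w c) ((M / N ^ 2) • u) 0 ≤ M / N := by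
    have hcM : l2norm c + ε ≤ M := by linarith [le_max_left (l2norm c) (-rdot b u)]
    have hM : 0 < M := by linarith [l2norm_nonneg c]
    rw [dnorm, frobNorm_vecMulVec, l2norm_smul, l2norm_smul, l2norm_zero, ← hNdef, abs_neg,
      abs_of_pos (by positivity), abs_of_pos (by positivity)]
    refine max_le ?_ (max_le ?_ (by positivity)) <;> field_simp <;> linarith
  calc N * distPri A b c ≤ N * (M / N) :=
        mul_le_mul_of_nonneg_left ((distPri_le 0 hinf).trans hdnorm) hN.le
    _ = M := mul_div_cancel₀ M hN.ne'

lemma l2norm_mul_distDual_le {x : κ → ℝ} (hx : ∀ j, 0 ≤ x j) (hAx : A *ᵥ x = b) :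
    l2norm x * distDual A b c ≤ max (l2norm b) (rdot c x) := by
  rcases eq_or_ne x 0 with rfl | hx0
  · simp [l2norm_nonneg]
  set N := l2norm x with hNdef
  have hN : 0 < N := l2norm_pos hx0
  have hxx : rdot x x = N ^ 2 := (l2norm_sq x).symm
  refine le_of_forall_pos_le_add fun ε hε => ?_
  set M := max (l2norm b) (rdot c x) + ε
  set w := -(N ^ 2)⁻¹ • x
  have hwx : w ⬝ᵥ x = -1 := by
    rw [smul_dotProduct, smul_eq_mul]; change -(N ^ 2)⁻¹ * rdot x x = -1
    rw [hxx]; field_simp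
  -- `x` certifies the infeasibility of the rank-one perturbation `(A - b xᵀ / N², c - M x / N²)`
  have hinf : ¬ DualFeasible (A + vecMulVec b w) (c + -(M / N ^ 2) • x) := by
    refine not_dualFeasible_of_certificate hx ?_ ?_
    · rw [add_mulVec, hAx, vecMulVec_mulVec, hwx, MulOpposite.op_neg, MulOpposite.op_one,
        neg_smul, one_smul, add_neg_cancel]
    · change (c + -(M / N ^ 2) • x) ⬝ᵥ x < 0
      rw [add_dotProduct, smul_dotProduct, smul_eq_mul]
      change rdot c x + -(M / N ^ 2) * rdot x x < 0
      rw [hxx, neg_mul, div_mul_cancel₀ _ (by positivity)]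
      linarith [le_max_right (l2norm b) (rdot c x)]
  have hdnorm : dnorm (vecMulVec b w) 0 (-(M / N ^ 2) • x) ≤ M / N := by
    have hbM : l2norm b + ε ≤ M := by linarith [le_max_left (l2norm b) (rdot c x)]
    have hM : 0 < M := by linarith [l2norm_nonneg b]
    rw [dnorm, frobNorm_vecMulVec, l2norm_smul, l2norm_smul, l2norm_zero, ← hNdef, abs_neg,
      abs_neg, abs_of_pos (by positivity), abs_of_pos (by positivity)]
    refine max_le ?_ (max_le (by positivity) ?_) <;> field_simp <;> linarith
  calc N * distDual A b c ≤ N * (M / N) :=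
        mul_le_mul_of_nonneg_left ((distDual_le 0 hinf).trans hdnorm) hN.le
    _ = M := mul_div_cancel₀ M hN.ne'

end Distance

section Optimality

variable {ι κ : Type*} [Fintype ι] [Fintype κ]

structure IsOptimalPair (A : Matrix ι κ ℝ) (b : ι → ℝ) (c : κ → ℝ) (x : κ → ℝ) (u : ι → ℝ) :
    Prop where
  mulVec_eq : A *ᵥ x = b
  nonneg : ∀ j, 0 ≤ x j
  dual_feasible : ∀ j, (Aᵀ *ᵥ u) j ≤ c j
  rdot_eq : rdot c x = rdot b u

variable {A : Matrix ι κ ℝ} {b : ι → ℝ} {c : κ → ℝ} {x : κ → ℝ} {u : ι → ℝ}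

lemma IsOptimalPair.l2norm_mul_distPri_mul_distDual_le (h : IsOptimalPair A b c x u) :
    l2norm u * (distPri A b c * distDual A b c) ≤ dnorm A b c ^ 2 := by
  have hρD : 0 ≤ distDual A b c := distDual_nonneg
  have hD : 0 ≤ dnorm A b c := dnorm_nonneg A b c
  have hu := l2norm_mul_distPri_le (b := b) h.dual_feasible
  rw [← h.rdot_eq] at hu
  rw [← mul_assoc, sq]
  rcases le_total (-rdot c x) (l2norm c) with hv | hv
  · rw [max_eq_left hv] at hu
    exact mul_le_mul (hu.trans l2norm_le_dnorm_right) distDual_le_dnorm hρD hD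
  · rw [max_eq_right hv] at hu
    have hx := l2norm_mul_distDual_le (c := c) h.nonneg h.mulVec_eq
    rw [max_eq_left (by linarith [l2norm_nonneg b, l2norm_nonneg c])] at hx
    have hcx : -rdot c x ≤ l2norm c * l2norm x := (neg_le_abs _).trans (abs_rdot_le c x)
    calc l2norm u * distPri A b c * distDual A b c
        ≤ l2norm c * l2norm x * distDual A b c := mul_le_mul_of_nonneg_right (hu.trans hcx) hρD
      _ = l2norm c * (l2norm x * distDual A b c) := mul_assoc _ _ _
      _ ≤ dnorm A b c * dnorm A b c :=
        mul_le_mul l2norm_le_dnorm_right (hx.trans l2norm_le_dnorm_left)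
          (by positivity [l2norm_nonneg x]) hD

lemma IsOptimalPair.l2norm_mul_deltaP_mul_deltaD_le (h : IsOptimalPair A b c x u) :
    l2norm u * (deltaP A b c * deltaD A b c) ≤ 1 := by
  rcases (dnorm_nonneg A b c).eq_or_lt with hD | hD
  · simp [deltaP, deltaD, ← hD]
  rw [deltaP, deltaD, div_mul_div_comm, ← sq, mul_div_assoc', div_le_one (by positivity)]
  exact h.l2norm_mul_distPri_mul_distDual_le

end Optimality

lemma le_one_add_sqrt_two_mul_of_sq_add_sq_le {a s C : ℝ} (hC : 0 ≤ C)
    (h : a ^ 2 + s ^ 2 ≤ 2 * C * a + C ^ 2) : a ≤ (1 + √2) * C := by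
  have hsq : (a - C) ^ 2 ≤ (√2 * C) ^ 2 := by
    rw [mul_pow, Real.sq_sqrt zero_le_two]; linarith [sq_nonneg s]
  linarith [le_of_sq_le_sq hsq (by positivity)]

lemma le_sqrt_two_mul_of_sq_add_sq_le {a s C : ℝ} (hC : 0 ≤ C)
    (h : a ^ 2 + s ^ 2 ≤ 2 * C * a + C ^ 2) : s ≤ √2 * C := by
  refine le_of_sq_le_sq ?_ (by positivity)
  rw [mul_pow, Real.sq_sqrt zero_le_two]
  nlinarith [sq_nonneg (a - C)]

section Penalty

variable {ι κ : Type*} [Fintype ι] [Fintype κ] {A : Matrix ι κ ℝ} {b : ι → ℝ} {c : κ → ℝ}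
  {ub : ι → ℝ} {xb : κ → ℝ} {β C : ℝ} {x xβ : κ → ℝ} {u : ι → ℝ}

lemma fpen_of_mulVec_eq (hx : A *ᵥ x = b) :
    fpen A b c ub xb β x = rdot c x + 1 / (2 * β) * l2norm (x - xb) ^ 2 := by
  have h0 : rdot ub (0 : ι → ℝ) = 0 := dotProduct_zero ub
  simp [fpen, hx, h0]

lemma fpen_le_rdot_add_of_feasible (hβ : 0 < β) (hx : A *ᵥ x = b)
    (hxC : l2norm (x - xb) ≤ C) (hmin : fpen A b c ub xb β xβ ≤ fpen A b c ub xb β x) :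
    rdot c xβ - rdot ub (A *ᵥ xβ - b) + β / 2 * l2norm (A *ᵥ xβ - b) ^ 2
      + 1 / (2 * β) * l2norm (xβ - xb) ^ 2 ≤ rdot c x + C ^ 2 / (2 * β) := by
  rw [fpen_of_mulVec_eq hx, fpen] at hmin
  have hq : 1 / (2 * β) * l2norm (x - xb) ^ 2 ≤ C ^ 2 / (2 * β) := by
    rw [one_div_mul_eq_div]; gcongr; exact l2norm_nonneg _
  linarith

lemma IsOptimalPair.penalty_sq_le (h : IsOptimalPair A b c x u) (hβ : 0 < β)
    (hxβ : ∀ j, 0 ≤ xβ j) (hxC : l2norm (x - xb) ≤ C) (huC : l2norm (u - ub) ≤ C)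
    (hmin : fpen A b c ub xb β xβ ≤ fpen A b c ub xb β x) :
    (β * l2norm (A *ᵥ xβ - b)) ^ 2 + l2norm (xβ - xb) ^ 2
      ≤ 2 * C * (β * l2norm (A *ᵥ xβ - b)) + C ^ 2 := by
  have hval := fpen_le_rdot_add_of_feasible hβ h.mulVec_eq hxC hmin
  have hlag := rdot_le_lagrangian (b := b) h.dual_feasible hxβ
  set r := A *ᵥ xβ - b
  have hcs : rdot ub r - rdot u r ≤ C * l2norm r := by
    have hsub : rdot (u - ub) r = rdot u r - rdot ub r := sub_dotProduct u ub r
    have hneg := (neg_le_abs _).trans ((abs_rdot_le (u - ub) r).trans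
      (mul_le_mul_of_nonneg_right huC (l2norm_nonneg r)))
    linarith
  have key : β / 2 * l2norm r ^ 2 + 1 / (2 * β) * l2norm (xβ - xb) ^ 2
      ≤ C * l2norm r + C ^ 2 / (2 * β) := by
    rw [h.rdot_eq] at hval; linarith
  calc (β * l2norm r) ^ 2 + l2norm (xβ - xb) ^ 2
      = 2 * β * (β / 2 * l2norm r ^ 2 + 1 / (2 * β) * l2norm (xβ - xb) ^ 2) := by
        field_simp
    _ ≤ 2 * β * (C * l2norm r + C ^ 2 / (2 * β)) := by gcongr
    _ = 2 * C * (β * l2norm r) + C ^ 2 := by field_simp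

lemma IsOptimalPair.abs_rdot_sub_le (h : IsOptimalPair A b c x u) (hβ : 0 < β)
    (hxβ : ∀ j, 0 ≤ xβ j) (hxC : l2norm (x - xb) ≤ C) (huC : l2norm (u - ub) ≤ C)
    (hmin : fpen A b c ub xb β xβ ≤ fpen A b c ub xb β x) :
    |rdot c x - rdot c xβ| ≤ (l2norm u + C) * l2norm (A *ᵥ xβ - b) + C ^ 2 / (2 * β) := by
  have hval := fpen_le_rdot_add_of_feasible hβ h.mulVec_eq hxC hmin
  have hlag := rdot_le_lagrangian (b := b) h.dual_feasible hxβ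
  set r := A *ᵥ xβ - b
  rw [← h.rdot_eq] at hlag
  have hr : 0 ≤ l2norm r := l2norm_nonneg r
  have hub : rdot ub r ≤ (l2norm u + C) * l2norm r :=
    (rdot_le ub r).trans (by gcongr; linarith [l2norm_le_add_sub u ub])
  have hu : -rdot u r ≤ l2norm u * l2norm r := (neg_le_abs _).trans (abs_rdot_le u r)
  have hC : 0 ≤ C := (l2norm_nonneg _).trans hxC
  rw [abs_sub_le_iff]
  constructor
  · have : 0 ≤ C ^ 2 / (2 * β) := by positivity
    linarith [mul_nonneg hC hr]
  · have : 0 ≤ β / 2 * l2norm r ^ 2 + 1 / (2 * β) * l2norm (xβ - xb) ^ 2 := by positivity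
    linarith

end Penalty

theorem qp_penalty_perturbation_bounds_general
    {m n : ℕ} (A : Matrix (Fin m) (Fin n) ℝ) (b : Fin m → ℝ) (c : Fin n → ℝ)
    (ub : Fin m → ℝ) (xb : Fin n → ℝ) (β : ℝ) (hβ : 0 < β)
    (hP : 0 < deltaP A b c) (hD : 0 < deltaD A b c)
    -- (x*, u*) : any primal–dual optimal pair
    (xs : Fin n → ℝ) (us : Fin m → ℝ)
    (hpfeas : A.mulVec xs = b) (hppos : ∀ j, 0 ≤ xs j)
    (hdfeas : ∀ j, 0 ≤ (c - Aᵀ.mulVec us) j)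
    (hstrong : rdot c xs = rdot b us)
    (Cs : ℝ) (hCs : Cs = max (l2norm (xs - xb)) (l2norm (us - ub)))
    -- x(β) : the minimizer of f_β over the nonnegative orthant
    (xβ : Fin n → ℝ) (hβnn : ∀ j, 0 ≤ xβ j)
    (hβmin : ∀ x : Fin n → ℝ, (∀ j, 0 ≤ x j) →
      fpen A b c ub xb β xβ ≤ fpen A b c ub xb β x) :
    l2norm (A.mulVec xβ - b) ≤ (1 / β) * (1 + Real.sqrt 2) * Cs ∧
    l2norm (xβ - xb) ≤ Real.sqrt 6 * Cs ∧
    (10 * Cs / (dnorm A b c * min (deltaP A b c) (deltaD A b c)) ≤ β →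
      |rdot c xs - rdot c xβ| ≤ (1 / β) *
        (25 * Cs / (2 * deltaP A b c * deltaD A b c) + 6 * Cs ^ 2
          + Real.sqrt 6 * l2norm xb * Cs)) := by
  have hopt : IsOptimalPair A b c xs us :=
    ⟨hpfeas, hppos, fun j => sub_nonneg.mp (hdfeas j), hstrong⟩
  have hxC : l2norm (xs - xb) ≤ Cs := hCs ▸ le_max_left _ _
  have huC : l2norm (us - ub) ≤ Cs := hCs ▸ le_max_right _ _
  have hC : 0 ≤ Cs := (l2norm_nonneg _).trans hxC
  have hmin := hβmin xs hppos
  have hsq := hopt.penalty_sq_le hβ hβnn hxC huC hmin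
  have hres := le_one_add_sqrt_two_mul_of_sq_add_sq_le hC hsq
  refine ⟨?_, ?_, fun _ => ?_⟩
  · rwa [mul_assoc, one_div_mul_eq_div, le_div_iff₀' hβ]
  · calc l2norm (xβ - xb) ≤ √2 * Cs := le_sqrt_two_mul_of_sq_add_sq_le hC hsq
      _ ≤ √6 * Cs := by gcongr; norm_num
  have hK : 0 < deltaP A b c * deltaD A b c := mul_pos hP hD
  have hU : l2norm us ≤ 1 / (deltaP A b c * deltaD A b c) := by
    rw [le_div_iff₀ hK]; exact hopt.l2norm_mul_deltaP_mul_deltaD_le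
  have hxb : 0 ≤ √6 * l2norm xb * Cs := by positivity [l2norm_nonneg xb]
  set K := deltaP A b c * deltaD A b c
  calc |rdot c xs - rdot c xβ|
      ≤ (l2norm us + Cs) * l2norm (A *ᵥ xβ - b) + Cs ^ 2 / (2 * β) :=
        hopt.abs_rdot_sub_le hβ hβnn hxC huC hmin
    _ ≤ (1 / K + Cs) * ((1 + √2) * Cs / β) + Cs ^ 2 / (2 * β) := by
        gcongr
        · exact l2norm_nonneg _
        · rwa [le_div_iff₀' hβ]
    _ = (1 / β) * ((1 / K + Cs) * (1 + √2) * Cs + Cs ^ 2 / 2) := by field_simp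
    _ ≤ (1 / β) * ((1 / K + Cs) * (5 / 2) * Cs + Cs ^ 2 / 2) := by
        gcongr; linarith [Real.sqrt_two_lt_three_halves]
    _ = (1 / β) * (5 / 2 * (Cs / K) + 3 * Cs ^ 2) := by ring
    _ ≤ (1 / β) * (25 / 2 * (Cs / K) + 6 * Cs ^ 2 + √6 * l2norm xb * Cs) := by
        gcongr (1 / β) * ?_
        linarith [div_nonneg hC hK.le, sq_nonneg Cs]
    _ = (1 / β) * (25 * Cs / (2 * deltaP A b c * deltaD A b c) + 6 * Cs ^ 2
          + √6 * l2norm xb * Cs) := by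
        rw [mul_assoc 2]; ring

/-- perturbation bounds for the regularized quadratic penalty
approximation of an LP (Theorem 1 of the paper). -/
theorem qp_penalty_perturbation_bounds
    {m n : ℕ} (A : Matrix (Fin m) (Fin n) ℝ) (b : Fin m → ℝ) (c : Fin n → ℝ)
    (hrank : A.rank = m)
    (ub : Fin m → ℝ) (xb : Fin n → ℝ) (β : ℝ) (hβ : 0 < β)
    (hP : 0 < deltaP A b c) (hD : 0 < deltaD A b c)
    -- (x*, u*) : any primal–dual optimal pair
    (xs : Fin n → ℝ) (us : Fin m → ℝ)
    (hpfeas : A.mulVec xs = b) (hppos : ∀ j, 0 ≤ xs j)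
    (hdfeas : ∀ j, 0 ≤ (c - Aᵀ.mulVec us) j)
    (hstrong : rdot c xs = rdot b us)
    (Cs : ℝ) (hCs : Cs = max (l2norm (xs - xb)) (l2norm (us - ub)))
    -- x(β) : the minimizer of f_β over the nonnegative orthant
    (xβ : Fin n → ℝ) (hβnn : ∀ j, 0 ≤ xβ j)
    (hβmin : ∀ x : Fin n → ℝ, (∀ j, 0 ≤ x j) →
      fpen A b c ub xb β xβ ≤ fpen A b c ub xb β x) :
    l2norm (A.mulVec xβ - b) ≤ (1 / β) * (1 + Real.sqrt 2) * Cs ∧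
    l2norm (xβ - xb) ≤ Real.sqrt 6 * Cs ∧
    (10 * Cs / (dnorm A b c * min (deltaP A b c) (deltaD A b c)) ≤ β →
      |rdot c xs - rdot c xβ| ≤ (1 / β) *
        (25 * Cs / (2 * deltaP A b c * deltaD A b c) + 6 * Cs ^ 2
          + Real.sqrt 6 * l2norm xb * Cs)) :=
  qp_penalty_perturbation_bounds_general A b c ub xb β hβ hP hD xs us hpfeas hppos hdfeas hstrong Cs
    hCs xβ hβnn hβmin
end

section
/- Let P be a packing program with data (A, b, c) ≥ 0, and let û ∈ [0,1]^m be an (ε, δ)-approximate solution of P. Then for any α ≥ ε / (min_{i=1,…,n} c_i), the point ũ := û/(1+α) is a (0, (δ+α)/(1+α))-approximate solution of P; in particular ũ is feasible (A^T ũ ≤ c, ũ ∈ [0,1]^m) and 0 ≤ b^T u* − b^T ũ ≤ ((δ+α)/(1+α)) b^T u*, where u* is an optimal solution of P. -/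
/-!
Scaling by `1 + α` with `α ≥ ε / minᵢ cᵢ` absorbs the violation: `cᵢ + ε ≤ (1 + α) cᵢ`, so
`ũ = û / (1 + α)` is feasible, hence `bᵀũ ≤ bᵀu*` by optimality. The loss is bounded by
`(1 + α)(bᵀu* - bᵀũ) = α bᵀu* + (bᵀu* - bᵀû) ≤ (α + δ) bᵀu*`.
-/

open Matrix Finset MeasureTheory ProbabilityTheory

section Scaling

variable {ι κ : Type*}

lemma rdot_div_right [Fintype ι] (a u : ι → ℝ) (s : ℝ) :
    rdot a (fun j => u j / s) = rdot a u / s := by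
  simp only [rdot, Finset.sum_div, mul_div_assoc]

lemma mulVec_div_right [Fintype κ] (M : Matrix ι κ ℝ) (u : κ → ℝ) (s : ℝ) (i : ι) :
    M.mulVec (fun j => u j / s) i = M.mulVec u i / s := by
  simp only [mulVec, dotProduct, Finset.sum_div, mul_div_assoc]

lemma nonneg_of_div_iInf_le {c : ι → ℝ} (hc : ∀ i, 0 ≤ c i) {ε α : ℝ} (hε : 0 ≤ ε)
    (hα : ε / (⨅ i, c i) ≤ α) : 0 ≤ α :=
  (div_nonneg hε (Real.iInf_nonneg hc)).trans hα

lemma le_mul_of_div_iInf_le [Finite ι] {c : ι → ℝ} (hc : ∀ i, 0 < c i) {ε α : ℝ}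
    (hε : 0 ≤ ε) (hα : ε / (⨅ i, c i) ≤ α) (i : ι) : ε ≤ α * c i := by
  have : Nonempty ι := ⟨i⟩
  obtain ⟨k, hk⟩ := exists_eq_ciInf_of_finite (f := c)
  have hα0 : 0 ≤ α := nonneg_of_div_iInf_le (fun i => (hc i).le) hε hα
  have hki : c k ≤ c i := hk ▸ ciInf_le (Finite.bddBelow_range c) i
  calc ε ≤ α * c k := (div_le_iff₀' (hc k)).1 (hk ▸ hα) |>.trans_eq (mul_comm _ _)
    _ ≤ α * c i := mul_le_mul_of_nonneg_left hki hα0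

lemma div_one_add_le_of_le_add {x c ε α : ℝ} (hx : x ≤ c + ε) (hε : ε ≤ α * c)
    (hα : 0 < 1 + α) : x / (1 + α) ≤ c := by
  rw [div_le_iff₀ hα]
  linarith

lemma sub_div_one_add_le {r h δ α : ℝ} (hrh : r - h ≤ δ * r) (hα : 0 < 1 + α) :
    r - h / (1 + α) ≤ (δ + α) / (1 + α) * r := by
  rw [div_mul_eq_mul_div, sub_le_iff_le_add, ← add_div, le_div_iff₀ hα]
  linarith

end Scaling

theorem packing_round_infeasible_solution_general
    {m n : ℕ}
    (A : Matrix (Fin m) (Fin n) ℝ) (b : Fin m → ℝ) (c : Fin n → ℝ)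
    -- nonnegative integer data, with c ≥ 1
    (hc1 : ∀ i, 1 ≤ c i)
    -- u* : an optimal solution of the packing program
    (ustar : Fin m → ℝ)
    (hus_opt : ∀ v : Fin m → ℝ, (∀ j, 0 ≤ v j ∧ v j ≤ 1) →
      (∀ i, Aᵀ.mulVec v i ≤ c i) → rdot b v ≤ rdot b ustar)
    -- û ∈ [0,1]^m : an (ε,δ)-approximate solution of the packing program
    (ε δ : ℝ) (hε : 0 ≤ ε)
    (uhat : Fin m → ℝ)
    (hhat_box : ∀ j, 0 ≤ uhat j ∧ uhat j ≤ 1)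
    (hhat_pack : ∀ i, Aᵀ.mulVec uhat i ≤ c i + ε)
    (hhat_obj : |rdot b uhat - rdot b ustar| ≤ δ * rdot b ustar)
    -- the scaling parameter α ≥ ε / minᵢ cᵢ
    (α : ℝ) (hα : ε / (⨅ i : Fin n, c i) ≤ α)
    -- ũ := û/(1+α)
    (util : Fin m → ℝ) (hutil : util = fun j => uhat j / (1 + α)) :
    (∀ j, 0 ≤ util j ∧ util j ≤ 1) ∧
    (∀ i, Aᵀ.mulVec util i ≤ c i) ∧
    0 ≤ rdot b ustar - rdot b util ∧
    rdot b ustar - rdot b util ≤ ((δ + α) / (1 + α)) * rdot b ustar := by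
  subst hutil
  have hc : ∀ i, 0 < c i := fun i => one_pos.trans_le (hc1 i)
  have hα0 : 0 ≤ α := nonneg_of_div_iInf_le (fun i => (hc i).le) hε hα
  have hα1 : 0 < 1 + α := by linarith
  have hbox : ∀ j, 0 ≤ uhat j / (1 + α) ∧ uhat j / (1 + α) ≤ 1 := fun j =>
    ⟨div_nonneg (hhat_box j).1 hα1.le,
      div_le_one_of_le₀ (by linarith [(hhat_box j).2]) hα1.le⟩
  have hpack : ∀ i, Aᵀ.mulVec (fun j => uhat j / (1 + α)) i ≤ c i := fun i => by
    rw [mulVec_div_right]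
    exact div_one_add_le_of_le_add (hhat_pack i) (le_mul_of_div_iInf_le hc hε hα i) hα1
  refine ⟨hbox, hpack, sub_nonneg.2 (hus_opt _ hbox hpack), ?_⟩
  rw [rdot_div_right]
  exact sub_div_one_add_le (by linarith [(abs_le.1 hhat_obj).1]) hα1

/-- rounding an (ε,δ)-approximate solution of a packing program to a
feasible (0, (δ+α)/(1+α))-approximate solution by scaling. -/
theorem packing_round_infeasible_solution
    {m n : ℕ} (hn : 0 < n)
    (A : Matrix (Fin m) (Fin n) ℝ) (b : Fin m → ℝ) (c : Fin n → ℝ)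
    -- nonnegative integer data, with c ≥ 1
    (hAint : ∀ j i, ∃ z : ℤ, A j i = z) (hAnn : ∀ j i, 0 ≤ A j i)
    (hbint : ∀ j, ∃ z : ℤ, b j = z) (hbnn : ∀ j, 0 ≤ b j)
    (hcint : ∀ i, ∃ z : ℤ, c i = z) (hc1 : ∀ i, 1 ≤ c i)
    -- u* : an optimal solution of the packing program
    (ustar : Fin m → ℝ)
    (hus_box : ∀ j, 0 ≤ ustar j ∧ ustar j ≤ 1)
    (hus_pack : ∀ i, Aᵀ.mulVec ustar i ≤ c i)
    (hus_opt : ∀ v : Fin m → ℝ, (∀ j, 0 ≤ v j ∧ v j ≤ 1) →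
      (∀ i, Aᵀ.mulVec v i ≤ c i) → rdot b v ≤ rdot b ustar)
    -- û ∈ [0,1]^m : an (ε,δ)-approximate solution of the packing program
    (ε δ : ℝ) (hε : 0 ≤ ε) (hδ : 0 ≤ δ)
    (uhat : Fin m → ℝ)
    (hhat_box : ∀ j, 0 ≤ uhat j ∧ uhat j ≤ 1)
    (hhat_pack : ∀ i, Aᵀ.mulVec uhat i ≤ c i + ε)
    (hhat_obj : |rdot b uhat - rdot b ustar| ≤ δ * rdot b ustar)
    -- the scaling parameter α ≥ ε / minᵢ cᵢ
    (α : ℝ) (hα : ε / (⨅ i : Fin n, c i) ≤ α)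
    -- ũ := û/(1+α)
    (util : Fin m → ℝ) (hutil : util = fun j => uhat j / (1 + α)) :
    (∀ j, 0 ≤ util j ∧ util j ≤ 1) ∧
    (∀ i, Aᵀ.mulVec util i ≤ c i) ∧
    0 ≤ rdot b ustar - rdot b util ∧
    rdot b ustar - rdot b util ≤ ((δ + α) / (1 + α)) * rdot b ustar :=
  packing_round_infeasible_solution_general A b c hc1 ustar hus_opt ε δ hε uhat hhat_box hhat_pack
    hhat_obj α hα util hutil
end

section
/- Let G = (V, E) be a graph with |V| = n ≥ 3 and |E| = m, and let (A, b) be the constraint data of the vertex-cover LP written as Ax ≥ b, x ≥ 0 (rows e_u^T + e_v^T with right-hand side 1 for each edge (u,v) ∈ E, and rows −e_v^T with right-hand side −1 for each vertex v encoding x_v ≤ 1). If (ΔA, Δb) is any perturbation such that the perturbed system (A + ΔA)x ≥ b + Δb has no solution x ≥ 0, then max(‖ΔA‖_F, ‖Δb‖₂) ≥ 1/(4√n). Consequently, the primal distance to infeasibility of the vertex-cover LP is at least 1/(4√n), i.e. δ_P ≥ ‖d‖^{-1} n^{-1/2}/4. -/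
/-!
The point `x ≡ 2/3` satisfies every row of the vertex-cover system with slack `1/3`
(edge rows read `4/3 ≥ 1`, vertex rows `-2/3 ≥ -1`). By Cauchy–Schwarz a perturbation changes
row `i` at `x` by at most `‖ΔA‖_F ‖x‖₂ + ‖Δb‖₂ = (2/3)√n ‖ΔA‖_F + ‖Δb‖₂`, which is below
`1/6 + 1/(4√n) ≤ 1/3` when both norms are below `1/(4√n)` and `n ≥ 3`; so `x` stays feasible.
-/

open Matrix Finset MeasureTheory ProbabilityTheory

/-- Feasibility of the inequality-form primal LP `Ax ≥ b, x ≥ 0`. -/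
def PrimalFeasibleIneq {ι κ : Type*} [Fintype ι] [Fintype κ]
    (A : Matrix ι κ ℝ) (b : ι → ℝ) : Prop :=
  ∃ x : κ → ℝ, (∀ j, 0 ≤ x j) ∧ ∀ i, b i ≤ A.mulVec x i

/-- Feasibility of the dual `Aᵀy ≤ c, y ≥ 0` of an inequality-form primal LP. -/
def DualFeasibleIneq {ι κ : Type*} [Fintype ι] [Fintype κ]
    (A : Matrix ι κ ℝ) (c : κ → ℝ) : Prop :=
  ∃ y : ι → ℝ, (∀ i, 0 ≤ y i) ∧ ∀ j, Aᵀ.mulVec y j ≤ c j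

/-- Distance of the data to primal infeasibility (inequality form). -/
noncomputable def distPriIneq {ι κ : Type*} [Fintype ι] [Fintype κ]
    (A : Matrix ι κ ℝ) (b : ι → ℝ) (c : κ → ℝ) : ℝ :=
  sInf { r : ℝ | ∃ (dA : Matrix ι κ ℝ) (db : ι → ℝ) (dc : κ → ℝ),
    ¬ PrimalFeasibleIneq (A + dA) (b + db) ∧ r = dnorm dA db dc }

/-- Distance of the data to dual infeasibility (inequality form). -/
noncomputable def distDualIneq {ι κ : Type*} [Fintype ι] [Fintype κ]
    (A : Matrix ι κ ℝ) (b : ι → ℝ) (c : κ → ℝ) : ℝ :=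
  sInf { r : ℝ | ∃ (dA : Matrix ι κ ℝ) (db : ι → ℝ) (dc : κ → ℝ),
    ¬ DualFeasibleIneq (A + dA) (c + dc) ∧ r = dnorm dA db dc }

/-- Renegar primal condition number `δ_P` (inequality form). -/
noncomputable def deltaPIneq {ι κ : Type*} [Fintype ι] [Fintype κ]
    (A : Matrix ι κ ℝ) (b : ι → ℝ) (c : κ → ℝ) : ℝ := distPriIneq A b c / dnorm A b c

/-- Renegar dual condition number `δ_D` (inequality form). -/
noncomputable def deltaDIneq {ι κ : Type*} [Fintype ι] [Fintype κ]
    (A : Matrix ι κ ℝ) (b : ι → ℝ) (c : κ → ℝ) : ℝ := distDualIneq A b c / dnorm A b c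

/-- Constraint matrix of the vertex-cover LP in inequality form `Ax ≥ b, x ≥ 0`:
one row `e_uᵀ + e_vᵀ` per edge and one row `−e_vᵀ` per vertex. -/
noncomputable def vcMat {n m : ℕ} (E : Fin m → Fin n × Fin n) :
    Matrix (Fin m ⊕ Fin n) (Fin n) ℝ :=
  Matrix.of (Sum.elim
    (fun e w => (if w = (E e).1 then (1 : ℝ) else 0) + (if w = (E e).2 then (1 : ℝ) else 0))
    (fun v w => if w = v then (-1 : ℝ) else 0))

/-- Right-hand side of the vertex-cover LP in inequality form: `1` for edge rows,
`−1` for the rows encoding `x_v ≤ 1`. -/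
noncomputable def vcRhs (n m : ℕ) : Fin m ⊕ Fin n → ℝ :=
  Sum.elim (fun _ => (1 : ℝ)) (fun _ => (-1 : ℝ))

lemma le_l2norm {ι : Type*} [Fintype ι] (x : ι → ℝ) (i : ι) : x i ≤ l2norm x :=
  calc x i ≤ |x i| := le_abs_self _
    _ = √(x i ^ 2) := (Real.sqrt_sq_eq_abs _).symm
    _ ≤ l2norm x := Real.sqrt_le_sqrt <|
        Finset.single_le_sum (fun j _ => sq_nonneg (x j)) (Finset.mem_univ i)

lemma l2norm_le_frobNorm {ι κ : Type*} [Fintype ι] [Fintype κ] (A : Matrix ι κ ℝ) (i : ι) :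
    l2norm (A i) ≤ frobNorm A :=
  Real.sqrt_le_sqrt <| Finset.single_le_sum
    (fun k _ => Finset.sum_nonneg fun j _ => sq_nonneg (A k j)) (Finset.mem_univ i)

lemma l2norm_const (κ : Type*) [Fintype κ] (t : ℝ) :
    l2norm (fun _ : κ => t) = |t| * √(Fintype.card κ) := by
  simp only [l2norm, Finset.sum_const, Finset.card_univ, nsmul_eq_mul]
  rw [mul_comm, Real.sqrt_mul (by positivity), Real.sqrt_sq_eq_abs]

lemma neg_frobNorm_mul_l2norm_le_mulVec {ι κ : Type*} [Fintype ι] [Fintype κ]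
    (A : Matrix ι κ ℝ) (x : κ → ℝ) (i : ι) : -(frobNorm A * l2norm x) ≤ (A *ᵥ x) i := by
  have hcs : ∑ j, -A i j * x j ≤ l2norm (A i) * l2norm x := by
    simpa [l2norm] using Real.sum_mul_le_sqrt_mul_sqrt Finset.univ (-A i) x
  have hrow : l2norm (A i) * l2norm x ≤ frobNorm A * l2norm x :=
    mul_le_mul_of_nonneg_right (l2norm_le_frobNorm A i) (Real.sqrt_nonneg _)
  simp only [neg_mul, Finset.sum_neg_distrib] at hcs
  simp only [mulVec, dotProduct]
  linarith

theorem primalFeasibleIneq_add_of_slack {ι κ : Type*} [Fintype ι] [Fintype κ]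
    {A dA : Matrix ι κ ℝ} {b db : ι → ℝ} {x : κ → ℝ} {s : ℝ} (hx : ∀ j, 0 ≤ x j)
    (hslack : ∀ i, b i + s ≤ (A *ᵥ x) i) (hpert : frobNorm dA * l2norm x + l2norm db ≤ s) :
    PrimalFeasibleIneq (A + dA) (b + db) := by
  refine ⟨x, hx, fun i => ?_⟩
  have hdA := neg_frobNorm_mul_l2norm_le_mulVec dA x i
  have hdb := le_l2norm db i
  have := hslack i
  rw [Pi.add_apply, add_mulVec, Pi.add_apply]
  linarith

lemma not_primalFeasibleIneq_zero_one {ι κ : Type*} [Fintype ι] [Fintype κ] [Nonempty ι] :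
    ¬ PrimalFeasibleIneq (0 : Matrix ι κ ℝ) 1 := by
  rintro ⟨x, -, hx⟩
  have := hx (Classical.arbitrary ι)
  simp only [Pi.one_apply, zero_mulVec, Pi.zero_apply] at this
  exact one_ne_zero (le_antisymm this zero_le_one)

theorem le_distPriIneq {ι κ : Type*} [Fintype ι] [Fintype κ] [Nonempty ι]
    {A : Matrix ι κ ℝ} {b : ι → ℝ} (c : κ → ℝ) {r : ℝ}
    (h : ∀ (dA : Matrix ι κ ℝ) (db : ι → ℝ),
      ¬ PrimalFeasibleIneq (A + dA) (b + db) → r ≤ max (frobNorm dA) (l2norm db)) :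
    r ≤ distPriIneq A b c := by
  apply le_csInf
  · refine ⟨_, -A, 1 - b, 0, ?_, rfl⟩
    rw [add_neg_cancel, add_sub_cancel]
    exact not_primalFeasibleIneq_zero_one
  · rintro _ ⟨dA, db, dc, hinf, rfl⟩
    exact (h dA db hinf).trans (max_le_max le_rfl (le_max_left _ _))

lemma div_dnorm_le_deltaPIneq {ι κ : Type*} [Fintype ι] [Fintype κ]
    {A : Matrix ι κ ℝ} {b : ι → ℝ} {c : κ → ℝ} {r : ℝ} (h : r ≤ distPriIneq A b c) :
    r / dnorm A b c ≤ deltaPIneq A b c :=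
  div_le_div_of_nonneg_right h <| (Real.sqrt_nonneg _).trans (le_max_left _ _)

lemma vcMat_mulVec_const {n m : ℕ} (E : Fin m → Fin n × Fin n) (t : ℝ) :
    vcMat E *ᵥ (fun _ => t) = Sum.elim (fun _ => 2 * t) (fun _ => -t) := by
  ext (e | v)
  · simp [vcMat, mulVec, dotProduct, add_mul, Finset.sum_add_distrib, two_mul]
  · simp [vcMat, mulVec, dotProduct]

lemma vcRhs_add_third_le_mulVec {n m : ℕ} (E : Fin m → Fin n × Fin n)
    (i : Fin m ⊕ Fin n) : vcRhs n m i + 1 / 3 ≤ (vcMat E *ᵥ fun _ => 2 / 3) i := by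
  rw [vcMat_mulVec_const]
  rcases i with e | v <;> norm_num [vcRhs]

theorem vcMat_primalFeasibleIneq_of_max_lt {n m : ℕ} (hn : 3 ≤ n) (E : Fin m → Fin n × Fin n)
    {dA : Matrix (Fin m ⊕ Fin n) (Fin n) ℝ} {db : Fin m ⊕ Fin n → ℝ}
    (h : max (frobNorm dA) (l2norm db) < 1 / (4 * √n)) :
    PrimalFeasibleIneq (vcMat E + dA) (vcRhs n m + db) := by
  have hsqrt : 3 / 2 ≤ √(n : ℝ) :=
    Real.le_sqrt_of_sq_le <| by
      have : (3 : ℝ) ≤ n := by exact_mod_cast hn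
      linarith
  have hpos : 0 < √(n : ℝ) := by linarith
  have hdA : frobNorm dA * √n < 1 / 4 :=
    calc frobNorm dA * √n < 1 / (4 * √n) * √n :=
          mul_lt_mul_of_pos_right ((le_max_left _ _).trans_lt h) hpos
      _ = 1 / 4 := by field_simp
  have hdb : l2norm db < 1 / 6 :=
    (le_max_right _ _).trans_lt <| h.trans_le <| by
      rw [div_le_div_iff₀ (by positivity) (by norm_num)]; linarith
  refine primalFeasibleIneq_add_of_slack (fun _ => by norm_num)
    (vcRhs_add_third_le_mulVec E) ?_
  rw [l2norm_const, Fintype.card_fin, abs_of_pos (by norm_num : (0 : ℝ) < 2 / 3)]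
  nlinarith

theorem vertex_cover_primal_distance_to_infeasibility_general
    (n m : ℕ) (hn : 3 ≤ n)
    (E : Fin m → Fin n × Fin n)
    (A : Matrix (Fin m ⊕ Fin n) (Fin n) ℝ) (hA : A = vcMat E)
    (b : Fin m ⊕ Fin n → ℝ) (hb : b = vcRhs n m)
    (c : Fin n → ℝ) :
    (∀ (dA : Matrix (Fin m ⊕ Fin n) (Fin n) ℝ) (db : Fin m ⊕ Fin n → ℝ),
      ¬ PrimalFeasibleIneq (A + dA) (b + db) →
        1 / (4 * Real.sqrt n) ≤ max (frobNorm dA) (l2norm db)) ∧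
    1 / (4 * Real.sqrt n) ≤ distPriIneq A b c ∧
    (dnorm A b c)⁻¹ * (Real.sqrt n)⁻¹ / 4 ≤ deltaPIneq A b c := by
  subst hA hb
  have : Nonempty (Fin m ⊕ Fin n) := ⟨Sum.inr ⟨0, by omega⟩⟩
  have robust : ∀ (dA : Matrix (Fin m ⊕ Fin n) (Fin n) ℝ) (db : Fin m ⊕ Fin n → ℝ),
      ¬ PrimalFeasibleIneq (vcMat E + dA) (vcRhs n m + db) →
        1 / (4 * √n) ≤ max (frobNorm dA) (l2norm db) :=
    fun _ _ hinf => not_lt.1 fun hlt => hinf (vcMat_primalFeasibleIneq_of_max_lt hn E hlt)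
  have hdist := le_distPriIneq c robust
  refine ⟨robust, hdist, ?_⟩
  calc (dnorm (vcMat E) (vcRhs n m) c)⁻¹ * (√n)⁻¹ / 4
      = 1 / (4 * √n) / dnorm (vcMat E) (vcRhs n m) c := by field_simp
    _ ≤ deltaPIneq (vcMat E) (vcRhs n m) c := div_dnorm_le_deltaPIneq hdist

/-- any perturbation rendering the vertex-cover primal LP infeasible
has size at least `1/(4√n)`; consequently the primal distance to infeasibility is at
least `1/(4√n)` and `δ_P ≥ ‖d‖⁻¹ n^{-1/2}/4`. -/
theorem vertex_cover_primal_distance_to_infeasibility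
    (n m : ℕ) (hn : 3 ≤ n)
    (E : Fin m → Fin n × Fin n) (hE : ∀ e, (E e).1 ≠ (E e).2)
    (A : Matrix (Fin m ⊕ Fin n) (Fin n) ℝ) (hA : A = vcMat E)
    (b : Fin m ⊕ Fin n → ℝ) (hb : b = vcRhs n m)
    (c : Fin n → ℝ) (hc : c = fun _ => (1 : ℝ)) :
    (∀ (dA : Matrix (Fin m ⊕ Fin n) (Fin n) ℝ) (db : Fin m ⊕ Fin n → ℝ),
      ¬ PrimalFeasibleIneq (A + dA) (b + db) →
        1 / (4 * Real.sqrt n) ≤ max (frobNorm dA) (l2norm db)) ∧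
    1 / (4 * Real.sqrt n) ≤ distPriIneq A b c ∧
    (dnorm A b c)⁻¹ * (Real.sqrt n)⁻¹ / 4 ≤ deltaPIneq A b c :=
  vertex_cover_primal_distance_to_infeasibility_general n m hn E A hA b hb c
end
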